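/- Let (A,Δ) be an algebraic quantum group with dual counit ε̂ on Â. Then for every ω ∈ A' and a ∈ A (with ωa, aω ∈ M(Â)): ε̂(ωa) = ω(a) and ε̂(aω) = ω(a). -/

import Mathlib

open TensorProduct LinearMap

noncomputable section

/-- Slice on the left leg: `sliceL θ (x ⊗ y) = θ x • y`, i.e. `(θ ⊙ ι)`. -/
def sliceL {M N : Type*} [AddCommGroup M] [Module ℂ M] [AddCommGroup N] [Module ℂ N]
    (θ : M →ₗ[ℂ] ℂ) : M ⊗[ℂ] N →ₗ[ℂ] N :=
  TensorProduct.lift (LinearMap.lsmul ℂ N ∘ₗ θ)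

/-- Slice on the right leg: `sliceR θ (x ⊗ y) = θ y • x`, i.e. `(ι ⊙ θ)`. -/
def sliceR {M N : Type*} [AddCommGroup M] [Module ℂ M] [AddCommGroup N] [Module ℂ N]
    (θ : N →ₗ[ℂ] ℂ) : M ⊗[ℂ] N →ₗ[ℂ] M :=
  TensorProduct.lift ((LinearMap.lsmul ℂ M ∘ₗ θ).flip)

/-- An algebraic quantum group: a regular multiplier Hopf algebra `(A, Δ)` with a
(faithful) left invariant functional `φ`.  The comultiplication is encoded through the
canonical bijections `T1 a ⊗ b = Δ(a)(b ⊗ 1)`, `T2 (a ⊗ b) = Δ(a)(1 ⊗ b)`,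
`T3 (a ⊗ b) = (b ⊗ 1)Δ(a)`, `T4 (a ⊗ b) = (1 ⊗ b)Δ(a)` together with the left and right
multiplication operators `ΔL a`/`ΔR a` by `Δ(a)` on `A ⊗ A`. -/
structure AQG (A : Type*) [NonUnitalRing A] [Module ℂ A]
    [SMulCommClass ℂ A A] [IsScalarTower ℂ A A] where
  T1 : A ⊗[ℂ] A ≃ₗ[ℂ] A ⊗[ℂ] A
  T2 : A ⊗[ℂ] A ≃ₗ[ℂ] A ⊗[ℂ] A
  T3 : A ⊗[ℂ] A ≃ₗ[ℂ] A ⊗[ℂ] A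
  T4 : A ⊗[ℂ] A ≃ₗ[ℂ] A ⊗[ℂ] A
  counit : A →ₗ[ℂ] ℂ
  S : A ≃ₗ[ℂ] A
  phi : A →ₗ[ℂ] ℂ
  rho : A ≃ₗ[ℂ] A
  ΔL : A →ₗ[ℂ] (A ⊗[ℂ] A →ₗ[ℂ] A ⊗[ℂ] A)
  ΔR : A →ₗ[ℂ] (A ⊗[ℂ] A →ₗ[ℂ] A ⊗[ℂ] A)
  /- non-degeneracy of the algebra `A` -/
  nondeg_l : ∀ a : A, (∀ b : A, a * b = 0) → a = 0
  nondeg_r : ∀ a : A, (∀ b : A, b * a = 0) → a = 0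
  /- the counit is a non-zero homomorphism with `(ε ⊙ ι)Δ = (ι ⊙ ε)Δ = ι` -/
  counit_mul : ∀ a b : A, counit (a * b) = counit a * counit b
  counit_ne : counit ≠ 0
  counit_T1 : ∀ a b : A, sliceR counit (T1 (a ⊗ₜ b)) = a * b
  counit_T2 : ∀ a b : A, sliceL counit (T2 (a ⊗ₜ b)) = a * b
  counit_T3 : ∀ a b : A, sliceR counit (T3 (a ⊗ₜ b)) = b * a
  counit_T4 : ∀ a b : A, sliceL counit (T4 (a ⊗ₜ b)) = b * a
  /- the antipode -/
  S_mul : ∀ a b : A, S (a * b) = S b * S a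
  antipode_l : ∀ a b : A,
    LinearMap.mul' ℂ A (LinearMap.rTensor A S.toLinearMap (T2 (a ⊗ₜ b))) = counit a • b
  antipode_r : ∀ a b : A,
    LinearMap.mul' ℂ A (LinearMap.lTensor A S.toLinearMap (T3 (a ⊗ₜ b))) = counit a • b
  /- `φ` is a faithful left invariant functional -/
  phi_ne : phi ≠ 0
  phi_faithful_l : ∀ a : A, (∀ b : A, phi (a * b) = 0) → a = 0
  phi_faithful_r : ∀ a : A, (∀ b : A, phi (b * a) = 0) → a = 0
  left_inv_T1 : ∀ a b : A, sliceR phi (T1 (a ⊗ₜ b)) = phi a • b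
  left_inv_T3 : ∀ a b : A, sliceR phi (T3 (a ⊗ₜ b)) = phi a • b
  /- the weak KMS automorphism `ρ`: `φ(ab) = φ(b ρ(a))` -/
  rho_mul : ∀ a b : A, rho (a * b) = rho a * rho b
  phi_kms : ∀ a b : A, phi (a * b) = phi (b * rho a)
  /- `Δ` is a (non-degenerate) homomorphism into `M(A ⊗ A)` -/
  ΔL_mul : ∀ (a b : A) (z : A ⊗[ℂ] A), ΔL (a * b) z = ΔL a (ΔL b z)
  ΔR_mul : ∀ (a b : A) (z : A ⊗[ℂ] A), ΔR (a * b) z = ΔR b (ΔR a z)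
  ΔL_assoc : ∀ (a : A) (z w : A ⊗[ℂ] A), ΔL a (z * w) = ΔL a z * w
  ΔR_assoc : ∀ (a : A) (z w : A ⊗[ℂ] A), ΔR a (z * w) = z * ΔR a w
  ΔLR : ∀ (a : A) (z w : A ⊗[ℂ] A), ΔR a z * w = z * ΔL a w
  ΔL_T1 : ∀ (a b : A) (z : A ⊗[ℂ] A),
    T1 (a ⊗ₜ b) * z = ΔL a (TensorProduct.map (LinearMap.mulLeft ℂ b) LinearMap.id z)
  ΔL_T2 : ∀ (a b : A) (z : A ⊗[ℂ] A),
    T2 (a ⊗ₜ b) * z = ΔL a (TensorProduct.map LinearMap.id (LinearMap.mulLeft ℂ b) z)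
  ΔR_T3 : ∀ (a b : A) (z : A ⊗[ℂ] A),
    z * T3 (a ⊗ₜ b) = ΔR a (TensorProduct.map (LinearMap.mulRight ℂ b) LinearMap.id z)
  ΔR_T4 : ∀ (a b : A) (z : A ⊗[ℂ] A),
    z * T4 (a ⊗ₜ b) = ΔR a (TensorProduct.map LinearMap.id (LinearMap.mulRight ℂ b) z)
  /- coassociativity of `Δ` -/
  coassoc : ∀ a b c : A,
    (TensorProduct.assoc ℂ A A A)
        (LinearMap.rTensor A (T3.toLinearMap ∘ₗ (TensorProduct.mk ℂ A A).flip a)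
          (T2 (c ⊗ₜ b)))
      = LinearMap.lTensor A (T2.toLinearMap ∘ₗ (TensorProduct.mk ℂ A A).flip b)
          (T3 (c ⊗ₜ a))

namespace AQG

variable {A : Type*} [NonUnitalRing A] [Module ℂ A]
  [SMulCommClass ℂ A A] [IsScalarTower ℂ A A] (H : AQG A)

/-- The functional `φa : x ↦ φ(x a)`; the dual algebra is `Â = {φa : a ∈ A}`. -/
def lFun (a : A) : A →ₗ[ℂ] ℂ := H.phi ∘ₗ LinearMap.mulRight ℂ a

/-- The functional `aφ : x ↦ φ(a x)`; also `Â = {aφ : a ∈ A}`. -/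
def rFun (a : A) : A →ₗ[ℂ] ℂ := H.phi ∘ₗ LinearMap.mulLeft ℂ a

/-- The right invariant functional `ψ = φ ∘ S`. -/
def psi : A →ₗ[ℂ] ℂ := H.phi ∘ₗ H.S.toLinearMap

/-- The functional `ψa : x ↦ ψ(x a)`. -/
def lFunPsi (a : A) : A →ₗ[ℂ] ℂ := H.psi ∘ₗ LinearMap.mulRight ℂ a

/-- The right action of `Â` on `A'`: `Ract θ a = θ · (φa)`,
`(θ (φa))(x) = θ((ι ⊙ φa)Δ(x)) = θ((ι ⊙ φ)(Δ(x)(1 ⊗ a)))`. -/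
def Ract (θ : A →ₗ[ℂ] ℂ) (a : A) : A →ₗ[ℂ] ℂ :=
  θ ∘ₗ sliceR H.phi ∘ₗ H.T2.toLinearMap ∘ₗ (TensorProduct.mk ℂ A A).flip a

/-- The left action of `Â` on `A'`: `Lact θ a = (φa) · θ`,
`((φa) θ)(x) = θ((φa ⊙ ι)Δ(x)) = θ((φ ⊙ ι)(Δ(x)(a ⊗ 1)))`. -/
def Lact (θ : A →ₗ[ℂ] ℂ) (a : A) : A →ₗ[ℂ] ℂ :=
  θ ∘ₗ sliceL H.phi ∘ₗ H.T1.toLinearMap ∘ₗ (TensorProduct.mk ℂ A A).flip a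

/-- `c = (ι ⊙ θ)Δ(x)` as an element of `A` (a priori it is only a multiplier). -/
def IsRSlice (θ : A →ₗ[ℂ] ℂ) (x c : A) : Prop :=
  (∀ b : A, c * b = sliceR θ (H.T1 (x ⊗ₜ b))) ∧
  (∀ b : A, b * c = sliceR θ (H.T3 (x ⊗ₜ b)))

/-- `c = (θ ⊙ ι)Δ(x)` as an element of `A`. -/
def IsLSlice (θ : A →ₗ[ℂ] ℂ) (x c : A) : Prop :=
  (∀ b : A, c * b = sliceL θ (H.T2 (x ⊗ₜ b))) ∧
  (∀ b : A, b * c = sliceL θ (H.T4 (x ⊗ₜ b)))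

/-- `θ ∈ M(Â)`: all slices `(θ ⊙ ι)Δ(x)` and `(ι ⊙ θ)Δ(x)` belong to `A`. -/
def HasSlices (θ : A →ₗ[ℂ] ℂ) : Prop :=
  ∀ x : A, (∃ c, H.IsRSlice θ x c) ∧ (∃ c, H.IsLSlice θ x c)

end AQG

end

/-!
Pick `b` with `φ(b) ≠ 0`; it suffices to write `(ωa)(φb)` as `φc` with `φ(c) = ω(a) φ(b)`.
The product is `x ↦ ω(a (ι ⊙ φ)(Δ(x)(1 ⊗ b)))`, and the antipode identity
`S((ι ⊙ φ)(Δ(x)(1 ⊗ b))) = (ι ⊙ φ)((1 ⊗ x)Δ(b))` turns it into `x ↦ φ(x c)` with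
`c = (ωS⁻¹ ⊙ ι)(Δ(b)(S(a) ⊗ 1))`. Left invariance of `φ` then gives `φ(c) = ω(a) φ(b)`.
For `aω` the same computation runs with `(S(a) ⊗ 1)Δ(b)`.

The antipode identity, multiplied on the right by `d`, comes from applying
`p ⊗ w ↦ S(p) (ι ⊙ φ)(w)` to `Σ x₁ ⊗ Δ(x₂ b)(d ⊗ 1)` in two ways: left invariance gives
`S((ι ⊙ φ)(Δ(x)(1 ⊗ b))) d`, while `Δ(x₂ b) = Δ(x₂)Δ(b)`, coassociativity and
`Σ S(x₁)x₂ = ε(x)1` give `(ι ⊙ φ)((1 ⊗ x)Δ(b)(d ⊗ 1))`. All identities between multipliers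
are checked after multiplying by elements of `A ⊗ A`, using non-degeneracy.
-/

section Slice

variable {M N P Q : Type*} [AddCommGroup M] [Module ℂ M] [AddCommGroup N] [Module ℂ N]
  [AddCommGroup P] [Module ℂ P] [AddCommGroup Q] [Module ℂ Q]

@[simp]
theorem sliceR_tmul (θ : N →ₗ[ℂ] ℂ) (u : M) (v : N) : sliceR θ (u ⊗ₜ[ℂ] v) = θ v • u :=
  rfl

@[simp]
theorem sliceL_tmul (θ : M →ₗ[ℂ] ℂ) (u : M) (v : N) : sliceL θ (u ⊗ₜ[ℂ] v) = θ u • v :=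
  rfl

theorem sliceR_map (θ : Q →ₗ[ℂ] ℂ) (f : M →ₗ[ℂ] P) (g : N →ₗ[ℂ] Q) (Z : M ⊗[ℂ] N) :
    sliceR θ (map f g Z) = f (sliceR (θ ∘ₗ g) Z) := by
  induction Z using TensorProduct.induction_on <;> simp_all

theorem sliceL_map (θ : P →ₗ[ℂ] ℂ) (f : M →ₗ[ℂ] P) (g : N →ₗ[ℂ] Q) (Z : M ⊗[ℂ] N) :
    sliceL θ (map f g Z) = g (sliceL (θ ∘ₗ f) Z) := by
  induction Z using TensorProduct.induction_on <;> simp_all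

theorem sliceR_comp (θ : Q →ₗ[ℂ] ℂ) (g : N →ₗ[ℂ] Q) (Z : M ⊗[ℂ] N) :
    sliceR (θ ∘ₗ g) Z = sliceR θ (map id g Z) :=
  (sliceR_map θ id g Z).symm

theorem sliceL_comp (θ : P →ₗ[ℂ] ℂ) (f : M →ₗ[ℂ] P) (Z : M ⊗[ℂ] N) :
    sliceL (θ ∘ₗ f) Z = sliceL θ (map f id Z) :=
  (sliceL_map θ f id Z).symm

theorem apply_sliceR_eq_apply_sliceL (θ : M →ₗ[ℂ] ℂ) (η : N →ₗ[ℂ] ℂ) (Z : M ⊗[ℂ] N) :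
    θ (sliceR η Z) = η (sliceL θ Z) := by
  induction Z using TensorProduct.induction_on <;> simp_all [mul_comm]

theorem sliceL_eq_sliceR_comm (θ : M →ₗ[ℂ] ℂ) (Z : M ⊗[ℂ] N) :
    sliceL θ Z = sliceR θ (TensorProduct.comm ℂ M N Z) := by
  induction Z using TensorProduct.induction_on <;> simp_all

theorem eq_of_forall_sliceR_eq {W W' : M ⊗[ℂ] N}
    (h : ∀ θ : N →ₗ[ℂ] ℂ, sliceR θ W = sliceR θ W') : W = W' := by
  classical
  let c := Module.Basis.ofVectorSpace ℂ N
  have coord_eq (V : M ⊗[ℂ] N) i : equivFinsuppOfBasisRight c V i = sliceR (c.coord i) V := by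
    induction V using TensorProduct.induction_on <;> simp_all
  exact (equivFinsuppOfBasisRight c).injective (Finsupp.ext fun i => by rw [coord_eq, coord_eq, h])

theorem eq_of_forall_sliceL_eq {W W' : M ⊗[ℂ] N}
    (h : ∀ θ : M →ₗ[ℂ] ℂ, sliceL θ W = sliceL θ W') : W = W' :=
  (TensorProduct.comm ℂ M N).injective <|
    eq_of_forall_sliceR_eq fun θ => by rw [← sliceL_eq_sliceR_comm, ← sliceL_eq_sliceR_comm, h]

theorem eq_of_forall_map_left_eq {ι : Type*} (f : ι → M →ₗ[ℂ] M)
    (hf : ∀ x y, (∀ i, f i x = f i y) → x = y) {W W' : M ⊗[ℂ] N}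
    (h : ∀ i, map (f i) id W = map (f i) id W') : W = W' :=
  eq_of_forall_sliceR_eq fun θ => hf _ _ fun i => by
    simpa only [sliceR_map, comp_id] using congrArg (sliceR θ) (h i)

theorem eq_of_forall_map_right_eq {ι : Type*} (f : ι → N →ₗ[ℂ] N)
    (hf : ∀ x y, (∀ i, f i x = f i y) → x = y) {W W' : M ⊗[ℂ] N}
    (h : ∀ i, map id (f i) W = map id (f i) W') : W = W' :=
  eq_of_forall_sliceL_eq fun θ => hf _ _ fun i => by
    simpa only [sliceL_map, comp_id] using congrArg (sliceL θ) (h i)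

end Slice

namespace TensorProduct

section Mul

variable {R A B : Type*} [CommSemiring R]
  [NonUnitalSemiring A] [Module R A] [SMulCommClass R A A] [IsScalarTower R A A]
  [NonUnitalSemiring B] [Module R B] [SMulCommClass R B B] [IsScalarTower R B B]

theorem tmul_mul_eq_map (a : A) (b : B) (z : A ⊗[R] B) :
    (a ⊗ₜ[R] b) * z = map (mulLeft R a) (mulLeft R b) z := by
  induction z using TensorProduct.induction_on <;>
    simp_all [Algebra.TensorProduct.tmul_mul_tmul, mul_add]

theorem mul_tmul_eq_map (W : A ⊗[R] B) (a : A) (b : B) :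
    W * (a ⊗ₜ[R] b) = map (mulRight R a) (mulRight R b) W := by
  induction W using TensorProduct.induction_on <;>
    simp_all [Algebra.TensorProduct.tmul_mul_tmul, add_mul]

theorem map_mul_eq_map_mul {f : A →ₗ[R] A} {g : B →ₗ[R] B}
    (hf : ∀ x y, f (x * y) = f x * y) (hg : ∀ x y, g (x * y) = g x * y) (W z : A ⊗[R] B) :
    map f g (W * z) = map f g W * z := by
  induction W using TensorProduct.induction_on with
  | zero => simp
  | add x y hx hy => simp only [add_mul, map_add, hx, hy]
  | tmul u v =>
    induction z using TensorProduct.induction_on <;>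
      simp_all [Algebra.TensorProduct.tmul_mul_tmul, mul_add]

theorem map_mul_eq_mul_map {f : A →ₗ[R] A} {g : B →ₗ[R] B}
    (hf : ∀ x y, f (x * y) = x * f y) (hg : ∀ x y, g (x * y) = x * g y) (z W : A ⊗[R] B) :
    map f g (z * W) = z * map f g W := by
  induction W using TensorProduct.induction_on with
  | zero => simp
  | add x y hx hy => simp only [mul_add, map_add, hx, hy]
  | tmul u v =>
    induction z using TensorProduct.induction_on <;>
      simp_all [Algebra.TensorProduct.tmul_mul_tmul, add_mul]

theorem mul_map_eq_map_mul {f₁ f₂ : A →ₗ[R] A} {g₁ g₂ : B →ₗ[R] B}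
    (hf : ∀ x y, x * f₁ y = f₂ x * y) (hg : ∀ x y, x * g₁ y = g₂ x * y) (z W : A ⊗[R] B) :
    z * map f₁ g₁ W = map f₂ g₂ z * W := by
  induction W using TensorProduct.induction_on with
  | zero => simp
  | add x y hx hy => simp only [mul_add, map_add, hx, hy]
  | tmul u v =>
    induction z using TensorProduct.induction_on <;>
      simp_all [Algebra.TensorProduct.tmul_mul_tmul, add_mul]

theorem map_mulLeft_id_mul (a : A) (W z : A ⊗[R] B) :
    map (mulLeft R a) id (W * z) = map (mulLeft R a) id W * z :=
  map_mul_eq_map_mul (fun _ _ => (mul_assoc _ _ _).symm) (fun _ _ => rfl) W z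

theorem map_id_mulLeft_mul (b : B) (W z : A ⊗[R] B) :
    map id (mulLeft R b) (W * z) = map id (mulLeft R b) W * z :=
  map_mul_eq_map_mul (fun _ _ => rfl) (fun _ _ => (mul_assoc _ _ _).symm) W z

theorem map_mulRight_id_mul (a : A) (z W : A ⊗[R] B) :
    map (mulRight R a) id (z * W) = z * map (mulRight R a) id W :=
  map_mul_eq_mul_map (fun _ _ => mul_assoc _ _ _) (fun _ _ => rfl) z W

theorem map_id_mulRight_mul (b : B) (z W : A ⊗[R] B) :
    map id (mulRight R b) (z * W) = z * map id (mulRight R b) W :=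
  map_mul_eq_mul_map (fun _ _ => rfl) (fun _ _ => mul_assoc _ _ _) z W

theorem mul_map_mulLeft_id (a : A) (z W : A ⊗[R] B) :
    z * map (mulLeft R a) id W = map (mulRight R a) id z * W :=
  mul_map_eq_map_mul (fun _ _ => (mul_assoc _ _ _).symm) (fun _ _ => rfl) z W

theorem mul_map_id_mulLeft (b : B) (z W : A ⊗[R] B) :
    z * map id (mulLeft R b) W = map id (mulRight R b) z * W :=
  mul_map_eq_map_mul (fun _ _ => rfl) (fun _ _ => (mul_assoc _ _ _).symm) z W

end Mul

end TensorProduct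

section Nondegenerate

theorem eq_of_forall_mul_right_eq {A : Type*} [NonUnitalNonAssocRing A]
    (hA : ∀ a : A, (∀ b, a * b = 0) → a = 0) {x y : A} (h : ∀ b, x * b = y * b) : x = y :=
  sub_eq_zero.mp <| hA _ fun b => by rw [sub_mul, h, sub_self]

theorem eq_of_forall_mul_left_eq {A : Type*} [NonUnitalNonAssocRing A]
    (hA : ∀ a : A, (∀ b, b * a = 0) → a = 0) {x y : A} (h : ∀ b, b * x = b * y) : x = y :=
  sub_eq_zero.mp <| hA _ fun b => by rw [mul_sub, h, sub_self]

variable {A B : Type*}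
  [NonUnitalRing A] [Module ℂ A] [SMulCommClass ℂ A A] [IsScalarTower ℂ A A]
  [NonUnitalRing B] [Module ℂ B] [SMulCommClass ℂ B B] [IsScalarTower ℂ B B]

theorem tensor_eq_of_forall_mul_right_eq (hA : ∀ a : A, (∀ b, a * b = 0) → a = 0)
    (hB : ∀ a : B, (∀ b, a * b = 0) → a = 0) {W W' : A ⊗[ℂ] B}
    (h : ∀ z, W * z = W' * z) : W = W' := by
  refine eq_of_forall_map_right_eq (mulRight ℂ) (fun _ _ => eq_of_forall_mul_right_eq hB)
    fun b => eq_of_forall_map_left_eq (mulRight ℂ) (fun _ _ => eq_of_forall_mul_right_eq hA)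
      fun a => ?_
  simpa only [mul_tmul_eq_map, map_map, comp_id, id_comp] using h (a ⊗ₜ b)

theorem tensor_eq_of_forall_mul_left_eq (hA : ∀ a : A, (∀ b, b * a = 0) → a = 0)
    (hB : ∀ a : B, (∀ b, b * a = 0) → a = 0) {W W' : A ⊗[ℂ] B}
    (h : ∀ z, z * W = z * W') : W = W' := by
  refine eq_of_forall_map_right_eq (mulLeft ℂ) (fun _ _ => eq_of_forall_mul_left_eq hB)
    fun b => eq_of_forall_map_left_eq (mulLeft ℂ) (fun _ _ => eq_of_forall_mul_left_eq hA)
      fun a => ?_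
  simpa only [tmul_mul_eq_map, map_map, comp_id, id_comp] using h (a ⊗ₜ b)

end Nondegenerate

namespace AQG

variable {A : Type*} [NonUnitalRing A] [Module ℂ A] [SMulCommClass ℂ A A] [IsScalarTower ℂ A A]
  (H : AQG A)

theorem map_mulLeft_id_T2 (x a b : A) :
    map (mulLeft ℂ a) id (H.T2 (x ⊗ₜ b)) = map id (mulRight ℂ b) (H.T3 (x ⊗ₜ a)) := by
  refine tensor_eq_of_forall_mul_left_eq H.nondeg_r H.nondeg_r fun z =>
    tensor_eq_of_forall_mul_right_eq H.nondeg_l H.nondeg_l fun z' => ?_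
  calc z * map (mulLeft ℂ a) id (H.T2 (x ⊗ₜ b)) * z'
      = map (mulRight ℂ a) id z * H.ΔL x (map id (mulLeft ℂ b) z') := by
        rw [mul_map_mulLeft_id, mul_assoc, H.ΔL_T2]
    _ = z * H.T3 (x ⊗ₜ a) * map id (mulLeft ℂ b) z' := by rw [← H.ΔLR, H.ΔR_T3]
    _ = z * map id (mulRight ℂ b) (H.T3 (x ⊗ₜ a)) * z' := by
        rw [← map_id_mulRight_mul, ← mul_map_id_mulLeft]

theorem map_id_mulLeft_T1 (b m x : A) :
    map id (mulLeft ℂ x) (H.T1 (b ⊗ₜ m)) = map (mulRight ℂ m) id (H.T4 (b ⊗ₜ x)) := by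
  refine tensor_eq_of_forall_mul_left_eq H.nondeg_r H.nondeg_r fun z =>
    tensor_eq_of_forall_mul_right_eq H.nondeg_l H.nondeg_l fun z' => ?_
  calc z * map id (mulLeft ℂ x) (H.T1 (b ⊗ₜ m)) * z'
      = map id (mulRight ℂ x) z * H.ΔL b (map (mulLeft ℂ m) id z') := by
        rw [mul_assoc, ← map_id_mulLeft_mul, H.ΔL_T1, mul_map_id_mulLeft]
    _ = z * H.T4 (b ⊗ₜ x) * map (mulLeft ℂ m) id z' := by rw [← H.ΔLR, H.ΔR_T4]
    _ = z * map (mulRight ℂ m) id (H.T4 (b ⊗ₜ x)) * z' := by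
        rw [← map_mulRight_id_mul, ← mul_map_mulLeft_id]

theorem map_id_mulLeft_T3 (b m x : A) :
    map id (mulLeft ℂ x) (H.T3 (b ⊗ₜ m)) = map (mulLeft ℂ m) id (H.T4 (b ⊗ₜ x)) := by
  refine tensor_eq_of_forall_mul_left_eq H.nondeg_r H.nondeg_r fun z => ?_
  rw [mul_map_id_mulLeft, mul_map_mulLeft_id, H.ΔR_T3, H.ΔR_T4]
  simp only [map_map, comp_id, id_comp]

theorem T1_mul_tmul (y b d : A) : H.T1 ((y * b) ⊗ₜ d) = H.ΔL y (H.T1 (b ⊗ₜ d)) :=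
  tensor_eq_of_forall_mul_right_eq H.nondeg_l H.nondeg_l fun z => by
    rw [H.ΔL_T1, H.ΔL_mul, ← H.ΔL_T1, ← H.ΔL_assoc]

theorem map_mulRight_id_T2 (y m n : A) :
    map (mulRight ℂ m) id (H.T2 (y ⊗ₜ n)) = H.ΔL y (m ⊗ₜ n) :=
  tensor_eq_of_forall_mul_right_eq H.nondeg_l H.nondeg_l fun z => by
    rw [← mul_map_mulLeft_id, H.ΔL_T2, ← H.ΔL_assoc, tmul_mul_eq_map, map_map, comp_id, id_comp]

/-- `iteratedComulMul x w = ((Δ ⊗ ι)Δ(x))(1 ⊗ w)`, with the legs grouped as `A ⊗ (A ⊗ A)`. -/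
def iteratedComulMul (x : A) : A ⊗[ℂ] A →ₗ[ℂ] A ⊗[ℂ] (A ⊗[ℂ] A) :=
  (TensorProduct.assoc ℂ A A A).toLinearMap ∘ₗ rTensor A H.T2.toLinearMap
    ∘ₗ (TensorProduct.assoc ℂ A A A).symm.toLinearMap ∘ₗ (leftComm ℂ A A A).toLinearMap
    ∘ₗ lTensor A (H.T2.toLinearMap ∘ₗ TensorProduct.mk ℂ A A x)

theorem iteratedComulMul_tmul (x m n : A) :
    H.iteratedComulMul x (m ⊗ₜ n) = TensorProduct.assoc ℂ A A A
      (rTensor A (H.T2.toLinearMap ∘ₗ (TensorProduct.mk ℂ A A).flip m) (H.T2 (x ⊗ₜ n))) := by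
  have regroup (Z : A ⊗[ℂ] A) : (TensorProduct.assoc ℂ A A A).symm (leftComm ℂ A A A (m ⊗ₜ Z)) =
      rTensor A ((TensorProduct.mk ℂ A A).flip m) Z := by
    induction Z using TensorProduct.induction_on <;> simp_all [tmul_add]
  simp only [iteratedComulMul, coe_comp, Function.comp_apply, lTensor_tmul, LinearEquiv.coe_coe,
    regroup, rTensor_comp_apply, mk_apply]

theorem lTensor_ΔL_flip_T3 (x a : A) (w : A ⊗[ℂ] A) :
    lTensor A (H.ΔL.flip w) (H.T3 (x ⊗ₜ a)) = map (mulLeft ℂ a) id (H.iteratedComulMul x w) := by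
  induction w using TensorProduct.induction_on with
  | zero => simp
  | add w w' hw hw' => simp only [map_add, lTensor_add, LinearMap.add_apply, hw, hw']
  | tmul m n =>
    have hΔ : H.ΔL.flip (m ⊗ₜ n) =
        map (mulRight ℂ m) id ∘ₗ H.T2.toLinearMap ∘ₗ (TensorProduct.mk ℂ A A).flip n :=
      LinearMap.ext fun y => (H.map_mulRight_id_T2 y m n).symm
    rw [hΔ, lTensor_comp_apply, ← H.coassoc, iteratedComulMul_tmul]
    induction H.T2 (x ⊗ₜ n) using TensorProduct.induction_on with
    | zero => simp
    | add Z Z' hZ hZ' => simp only [map_add, hZ, hZ']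
    | tmul p q =>
      simp only [rTensor_tmul, coe_comp, Function.comp_apply, flip_apply, mk_apply,
        LinearEquiv.coe_coe, lTensor, map_map_assoc, map_tmul, id_coe, id_eq]
      rw [← H.map_mulLeft_id_T2]
      generalize H.T2 (p ⊗ₜ m) = W
      induction W using TensorProduct.induction_on <;> simp_all [add_tmul]

theorem lTensor_T1_T2 (x b d : A) :
    lTensor A (H.T1.toLinearMap ∘ₗ (TensorProduct.mk ℂ A A).flip d) (H.T2 (x ⊗ₜ b)) =
      H.iteratedComulMul x (H.T1 (b ⊗ₜ d)) := by
  refine eq_of_forall_map_left_eq (mulLeft ℂ) (fun _ _ => eq_of_forall_mul_left_eq H.nondeg_r)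
    fun a => ?_
  have hΔ : (H.T1.toLinearMap ∘ₗ (TensorProduct.mk ℂ A A).flip d) ∘ₗ mulRight ℂ b =
      H.ΔL.flip (H.T1 (b ⊗ₜ d)) :=
    LinearMap.ext fun y => H.T1_mul_tmul y b d
  rw [← lTensor_ΔL_flip_T3, ← hΔ]
  conv_rhs => rw [lTensor_comp_apply]
  rw [lTensor_def A (mulRight ℂ b), ← H.map_mulLeft_id_T2]
  simp only [lTensor, map_map, comp_id, id_comp]

def antipodeSlice : A ⊗[ℂ] (A ⊗[ℂ] A) →ₗ[ℂ] A :=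
  mul' ℂ A ∘ₗ map H.S.toLinearMap (sliceR H.phi)

@[simp]
theorem antipodeSlice_tmul (p : A) (w : A ⊗[ℂ] A) :
    H.antipodeSlice (p ⊗ₜ w) = H.S p * sliceR H.phi w := by
  simp [antipodeSlice]

theorem antipodeSlice_lTensor_T1 (d : A) (Z : A ⊗[ℂ] A) :
    H.antipodeSlice (lTensor A (H.T1.toLinearMap ∘ₗ (TensorProduct.mk ℂ A A).flip d) Z) =
      H.S (sliceR H.phi Z) * d := by
  induction Z using TensorProduct.induction_on with
  | zero => simp
  | add Z Z' hZ hZ' => simp only [map_add, hZ, hZ', add_mul]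
  | tmul p q => simp [H.left_inv_T1, smul_mul_assoc, mul_smul_comm]

theorem antipodeSlice_iteratedComulMul (x : A) (w : A ⊗[ℂ] A) :
    H.antipodeSlice (H.iteratedComulMul x w) = sliceR (H.phi ∘ₗ mulLeft ℂ x) w := by
  induction w using TensorProduct.induction_on with
  | zero => simp
  | add w w' hw hw' => simp only [map_add, hw, hw']
  | tmul m n =>
    have slice_assoc (W : A ⊗[ℂ] A) (q : A) :
        H.antipodeSlice (TensorProduct.assoc ℂ A A A (W ⊗ₜ q)) =
          H.phi q • mul' ℂ A (rTensor A H.S.toLinearMap W) := by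
      induction W using TensorProduct.induction_on <;> simp_all [add_tmul, mul_smul_comm]
    have antipode_counit (Z : A ⊗[ℂ] A) :
        H.antipodeSlice (TensorProduct.assoc ℂ A A A
          (rTensor A (H.T2.toLinearMap ∘ₗ (TensorProduct.mk ℂ A A).flip m) Z)) =
          H.counit (sliceR H.phi Z) • m := by
      induction Z using TensorProduct.induction_on with
      | zero => simp
      | add Z Z' hZ hZ' => simp only [map_add, hZ, hZ', add_smul]
      | tmul p q => simp [slice_assoc, H.antipode_l, smul_smul, mul_comm]
    rw [iteratedComulMul_tmul, antipode_counit, apply_sliceR_eq_apply_sliceL, H.counit_T2]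
    simp

theorem S_sliceR_T2 (x b : A) :
    H.S (sliceR H.phi (H.T2 (x ⊗ₜ b))) = sliceR H.phi (H.T4 (b ⊗ₜ x)) := by
  refine eq_of_forall_mul_right_eq H.nondeg_l fun d => ?_
  calc H.S (sliceR H.phi (H.T2 (x ⊗ₜ b))) * d
      = sliceR (H.phi ∘ₗ mulLeft ℂ x) (H.T1 (b ⊗ₜ d)) := by
        rw [← antipodeSlice_lTensor_T1, lTensor_T1_T2, antipodeSlice_iteratedComulMul]
    _ = sliceR H.phi (H.T4 (b ⊗ₜ x)) * d := by
        rw [sliceR_comp, map_id_mulLeft_T1, sliceR_map, comp_id, mulRight_apply]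

theorem S_symm_mul (u v : A) : H.S.symm (u * v) = H.S.symm v * H.S.symm u :=
  H.S.injective (by rw [H.S_mul]; simp)

theorem Ract_apply (θ : A →ₗ[ℂ] ℂ) (b x : A) :
    H.Ract θ b x = H.phi (sliceL (θ ∘ₗ H.S.symm.toLinearMap) (H.T4 (b ⊗ₜ x))) := by
  rw [← apply_sliceR_eq_apply_sliceL, ← S_sliceR_T2]
  simp [Ract]

theorem Ract_comp_mulLeft (ω : A →ₗ[ℂ] ℂ) (a b : A) :
    H.Ract (ω ∘ₗ mulLeft ℂ a) b =
      H.lFun (sliceL (ω ∘ₗ H.S.symm.toLinearMap) (H.T1 (b ⊗ₜ H.S a))) := by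
  have hS : (ω ∘ₗ mulLeft ℂ a) ∘ₗ H.S.symm.toLinearMap =
      (ω ∘ₗ H.S.symm.toLinearMap) ∘ₗ mulRight ℂ (H.S a) := by
    ext y
    simp [S_symm_mul]
  ext x
  rw [Ract_apply, hS, sliceL_comp, ← map_id_mulLeft_T1, sliceL_map, comp_id]
  rfl

theorem Ract_comp_mulRight (ω : A →ₗ[ℂ] ℂ) (a b : A) :
    H.Ract (ω ∘ₗ mulRight ℂ a) b =
      H.lFun (sliceL (ω ∘ₗ H.S.symm.toLinearMap) (H.T3 (b ⊗ₜ H.S a))) := by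
  have hS : (ω ∘ₗ mulRight ℂ a) ∘ₗ H.S.symm.toLinearMap =
      (ω ∘ₗ H.S.symm.toLinearMap) ∘ₗ mulLeft ℂ (H.S a) := by
    ext y
    simp [S_symm_mul]
  ext x
  rw [Ract_apply, hS, sliceL_comp, ← map_id_mulLeft_T3, sliceL_map, comp_id]
  rfl

theorem phi_sliceL_T1 (θ : A →ₗ[ℂ] ℂ) (b c : A) :
    H.phi (sliceL θ (H.T1 (b ⊗ₜ c))) = H.phi b * θ c := by
  rw [← apply_sliceR_eq_apply_sliceL, H.left_inv_T1, map_smul, smul_eq_mul]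

theorem phi_sliceL_T3 (θ : A →ₗ[ℂ] ℂ) (b c : A) :
    H.phi (sliceL θ (H.T3 (b ⊗ₜ c))) = H.phi b * θ c := by
  rw [← apply_sliceR_eq_apply_sliceL, H.left_inv_T3, map_smul, smul_eq_mul]

end AQG

/-- For every `ω ∈ A'` and `a ∈ A`, the functionals `ωa : x ↦ ω(ax)`
and `aω : x ↦ ω(xa)` belong to `M(Â)` and the extended dual counit satisfies
`ε̂(ωa) = ω(a)` and `ε̂(aω) = ω(a)`.  The extension of `ε̂` to `M(Â)` is characterized by
`ε̂(T) ε̂(η) = ε̂(T η)` for `η ∈ Â`, where `ε̂(φb) = φ(b)`. -/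
theorem AQG.dual_counit_formula {A : Type*} [NonUnitalRing A] [Module ℂ A]
    [SMulCommClass ℂ A A] [IsScalarTower ℂ A A] (H : AQG A)
    (ω : A →ₗ[ℂ] ℂ) (a : A) (e e' : ℂ)
    -- `e = ε̂(ωa)` : for every `b` with `(ωa)(φb) = φc` one has `e φ(b) = φ(c)`
    (he : ∀ b c : A, H.Ract (ω ∘ₗ LinearMap.mulLeft ℂ a) b = H.lFun c →
      e * H.phi b = H.phi c)
    -- `e' = ε̂(aω)`
    (he' : ∀ b c : A, H.Ract (ω ∘ₗ LinearMap.mulRight ℂ a) b = H.lFun c →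
      e' * H.phi b = H.phi c) :
    e = ω a ∧ e' = ω a := by
  obtain ⟨b, hb⟩ : ∃ b, H.phi b ≠ 0 := by
    by_contra! h
    exact H.phi_ne (LinearMap.ext h)
  have hωa : e * H.phi b = ω a * H.phi b := by
    simpa [H.phi_sliceL_T1, mul_comm] using he b _ (H.Ract_comp_mulLeft ω a b)
  have haω : e' * H.phi b = ω a * H.phi b := by
    simpa [H.phi_sliceL_T3, mul_comm] using he' b _ (H.Ract_comp_mulRight ω a b)
  exact ⟨mul_right_cancel₀ hb hωa, mul_right_cancel₀ hb haω⟩
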